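/- In every orthomodular lattice L, equation E*₂ holds: for all a₁, b₁, a₂, b₂, r ∈ L, if a₁ ⊥ b₁, a₂ ⊥ b₂, r ⊥ a₁, a₁ ⊥ a₂, and a₂ ⊥ r, then (a₁ ∪ a₂ ∪ r) ∩ (a₁ ∪ b₁) ∩ (a₂ ∪ b₂) ≤ b₁ ∪ b₂ ∪ r. -/
import Mathlib


/-- An ortholattice: a bounded lattice with an orthocomplementation. -/
class Ortholattice (α : Type*) extends Lattice α, BoundedOrder α where
  ocompl : α → α
  sup_ocompl : ∀ a : α, a ⊔ ocompl a = ⊤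
  inf_ocompl : ∀ a : α, a ⊓ ocompl a = ⊥
  ocompl_anti : ∀ a b : α, a ≤ b → ocompl b ≤ ocompl a
  ocompl_ocompl : ∀ a : α, ocompl (ocompl a) = a

postfix:max "ᗮ" => Ortholattice.ocompl

/-- An orthomodular lattice. -/
class OrthomodularLattice (α : Type*) extends Ortholattice α where
  orthomodular : ∀ a b : α, a ≤ b → b = a ⊔ (aᗮ ⊓ b)

/-- The Sasaki hook `x → y = x′ ∪ (x ∩ y)`. -/
def oimp {α : Type*} [Ortholattice α] (x y : α) : α := xᗮ ⊔ (x ⊓ y)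

section Aux

variable {α : Type*} [OrthomodularLattice α] {a b c e : α}

private lemma oc_oc (a : α) : aᗮᗮ = a := Ortholattice.ocompl_ocompl a

private lemma oc_anti (h : a ≤ b) : bᗮ ≤ aᗮ := Ortholattice.ocompl_anti a b h

private lemma le_oc_swap (h : a ≤ bᗮ) : b ≤ aᗮ := by
  have := oc_anti h
  rwa [oc_oc] at this

private lemma inf_oc (a : α) : a ⊓ aᗮ = ⊥ := Ortholattice.inf_ocompl a

private lemma eq_bot_of_le_of_le_oc (h1 : a ≤ b) (h2 : a ≤ bᗮ) : a = ⊥ :=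
  le_antisymm ((le_inf h1 h2).trans (inf_oc b).le) bot_le

private lemma oc_sup (a b : α) : (a ⊔ b)ᗮ = aᗮ ⊓ bᗮ := by
  apply le_antisymm
  · exact le_inf (oc_anti le_sup_left) (oc_anti le_sup_right)
  · apply le_oc_swap
    exact sup_le (le_oc_swap inf_le_left) (le_oc_swap inf_le_right)

private lemma oc_inf (a b : α) : (a ⊓ b)ᗮ = aᗮ ⊔ bᗮ := by
  have h : (aᗮ ⊔ bᗮ)ᗮ = a ⊓ b := by rw [oc_sup, oc_oc, oc_oc]
  rw [← h, oc_oc]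

private lemma om (h : a ≤ b) : b = a ⊔ (aᗮ ⊓ b) :=
  OrthomodularLattice.orthomodular a b h

/-- `a` commutes with `b`. -/
private def Cm (a b : α) : Prop := a = (a ⊓ b) ⊔ (a ⊓ bᗮ)

private lemma Cm.of_le (h : a ≤ b) : Cm a b := by
  unfold Cm
  rw [inf_eq_left.2 h, sup_eq_left.2 inf_le_left]

private lemma Cm.of_le_oc (h : a ≤ bᗮ) : Cm a b := by
  unfold Cm
  rw [inf_eq_left.2 h, sup_eq_right.2 inf_le_left]

private lemma Cm.oc_right (h : Cm a b) : Cm a bᗮ := by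
  unfold Cm
  rw [oc_oc, sup_comm]
  exact h

private lemma Cm.symm (h : Cm a b) : Cm b a := by
  set w := (b ⊓ a) ⊔ (b ⊓ aᗮ) with hw
  have hwb : w ≤ b := sup_le inf_le_left inf_le_left
  have hob : b = w ⊔ (wᗮ ⊓ b) := om hwb
  set z := wᗮ ⊓ b with hz
  have hzw : z ≤ wᗮ := inf_le_left
  have hzb : z ≤ b := inf_le_right
  have haz : a ≤ zᗮ := by
    have h1 : a ⊓ b ≤ zᗮ := by
      calc a ⊓ b ≤ w := by rw [hw, inf_comm]; exact le_sup_left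
      _ ≤ zᗮ := le_oc_swap hzw
    have h2 : a ⊓ bᗮ ≤ zᗮ := inf_le_right.trans (oc_anti hzb)
    calc a = (a ⊓ b) ⊔ (a ⊓ bᗮ) := h
    _ ≤ zᗮ := sup_le h1 h2
  have hza : z ≤ aᗮ := le_oc_swap haz
  have hzbot : z = ⊥ := by
    apply eq_bot_of_le_of_le_oc (b := wᗮ) hzw
    rw [oc_oc]
    calc z ≤ b ⊓ aᗮ := le_inf hzb hza
    _ ≤ w := le_sup_right
  rw [hzbot, sup_bot_eq] at hob
  exact hob

private lemma Cm.sup_right (h1 : Cm a b) (h2 : Cm a c) : Cm a (b ⊔ c) := by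
  set s := (a ⊓ (b ⊔ c)) ⊔ (a ⊓ (b ⊔ c)ᗮ) with hs
  have hsa : s ≤ a := sup_le inf_le_left inf_le_left
  have hoa : a = s ⊔ (sᗮ ⊓ a) := om hsa
  set t := sᗮ ⊓ a with ht
  have hts : t ≤ sᗮ := inf_le_left
  have hta : t ≤ a := inf_le_right
  have hbt : b ≤ tᗮ := by
    have hb : b = (b ⊓ a) ⊔ (b ⊓ aᗮ) := h1.symm
    have e1 : b ⊓ a ≤ tᗮ := by
      calc b ⊓ a ≤ a ⊓ (b ⊔ c) := le_inf inf_le_right (inf_le_left.trans le_sup_left)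
      _ ≤ s := le_sup_left
      _ ≤ tᗮ := le_oc_swap hts
    have e2 : b ⊓ aᗮ ≤ tᗮ := inf_le_right.trans (oc_anti hta)
    calc b = (b ⊓ a) ⊔ (b ⊓ aᗮ) := hb
    _ ≤ tᗮ := sup_le e1 e2
  have hct : c ≤ tᗮ := by
    have hc : c = (c ⊓ a) ⊔ (c ⊓ aᗮ) := h2.symm
    have e1 : c ⊓ a ≤ tᗮ := by
      calc c ⊓ a ≤ a ⊓ (b ⊔ c) := le_inf inf_le_right (inf_le_left.trans le_sup_right)
      _ ≤ s := le_sup_left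
      _ ≤ tᗮ := le_oc_swap hts
    have e2 : c ⊓ aᗮ ≤ tᗮ := inf_le_right.trans (oc_anti hta)
    calc c = (c ⊓ a) ⊔ (c ⊓ aᗮ) := hc
    _ ≤ tᗮ := sup_le e1 e2
  have htbot : t = ⊥ := by
    apply eq_bot_of_le_of_le_oc (b := sᗮ) hts
    rw [oc_oc]
    have : t ≤ a ⊓ (b ⊔ c)ᗮ := le_inf hta (le_oc_swap (sup_le hbt hct))
    exact this.trans le_sup_right
  rw [htbot, sup_bot_eq] at hoa
  exact hoa.trans hs

private lemma Cm.self_oc (a : α) : Cm aᗮ a := Cm.of_le_oc le_rfl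

/-- Foulis–Holland instance: if `b` and `c` both commute with `a`,
then `(b ⊔ c) ⊓ a = (b ⊓ a) ⊔ (c ⊓ a)`. -/
private lemma FH1 (hb : Cm b a) (hc : Cm c a) :
    (b ⊔ c) ⊓ a = (b ⊓ a) ⊔ (c ⊓ a) := by
  set u := (b ⊓ a) ⊔ (c ⊓ a) with hu
  set v := (b ⊔ c) ⊓ a with hv
  have huv : u ≤ v :=
    sup_le (le_inf (inf_le_left.trans le_sup_left) inf_le_right)
      (le_inf (inf_le_left.trans le_sup_right) inf_le_right)
  have hov : v = u ⊔ (uᗮ ⊓ v) := om huv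
  set w := uᗮ ⊓ v with hwdef
  have hwu : w ≤ uᗮ := inf_le_left
  have hwv : w ≤ v := inf_le_right
  have hwa : w ≤ a := hwv.trans inf_le_right
  have hbw : b ≤ wᗮ := by
    have e1 : b ⊓ a ≤ wᗮ := le_sup_left.trans (le_oc_swap hwu)
    have e2 : b ⊓ aᗮ ≤ wᗮ := inf_le_right.trans (oc_anti hwa)
    calc b = (b ⊓ a) ⊔ (b ⊓ aᗮ) := hb
    _ ≤ wᗮ := sup_le e1 e2
  have hcw : c ≤ wᗮ := by
    have e1 : c ⊓ a ≤ wᗮ := le_sup_right.trans (le_oc_swap hwu)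
    have e2 : c ⊓ aᗮ ≤ wᗮ := inf_le_right.trans (oc_anti hwa)
    calc c = (c ⊓ a) ⊔ (c ⊓ aᗮ) := hc
    _ ≤ wᗮ := sup_le e1 e2
  have hwbot : w = ⊥ :=
    eq_bot_of_le_of_le_oc (b := b ⊔ c) (hwv.trans inf_le_left)
      (le_oc_swap (sup_le hbw hcw))
  rw [hwbot, sup_bot_eq] at hov
  exact hov

/-- Foulis–Holland instance: if `a` commutes with `b` and `e`,
then `(a ⊔ b) ⊓ e = (a ⊓ e) ⊔ (b ⊓ e)`. -/
private lemma FH2 (hab : Cm a b) (hae : Cm a e) :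
    (a ⊔ b) ⊓ e = (a ⊓ e) ⊔ (b ⊓ e) := by
  set u := (a ⊓ e) ⊔ (b ⊓ e) with hu
  set v := (a ⊔ b) ⊓ e with hv
  have huv : u ≤ v :=
    sup_le (le_inf (inf_le_left.trans le_sup_left) inf_le_right)
      (le_inf (inf_le_left.trans le_sup_right) inf_le_right)
  have hov : v = u ⊔ (uᗮ ⊓ v) := om huv
  set w := uᗮ ⊓ v with hwdef
  have hwu : w ≤ uᗮ := inf_le_left
  have hwv : w ≤ v := inf_le_right
  have hwe : w ≤ e := hwv.trans inf_le_right
  have haw : a ≤ wᗮ := by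
    have e1 : a ⊓ e ≤ wᗮ := le_sup_left.trans (le_oc_swap hwu)
    have e2 : a ⊓ eᗮ ≤ wᗮ := inf_le_right.trans (oc_anti hwe)
    calc a = (a ⊓ e) ⊔ (a ⊓ eᗮ) := hae
    _ ≤ wᗮ := sup_le e1 e2
  have hwb : w ≤ b := by
    have h1 : w ≤ (a ⊔ b) ⊓ aᗮ := le_inf (hwv.trans inf_le_left) (le_oc_swap haw)
    have h2 : (a ⊔ b) ⊓ aᗮ = (a ⊓ aᗮ) ⊔ (b ⊓ aᗮ) :=
      FH1 (Cm.self_oc a).symm (hab.symm.oc_right)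
    rw [h2, inf_oc, bot_sup_eq] at h1
    exact h1.trans inf_le_left
  have hwbot : w = ⊥ := by
    apply eq_bot_of_le_of_le_oc (b := uᗮ) hwu
    rw [oc_oc]
    exact (le_inf hwb hwe).trans le_sup_right
  rw [hwbot, sup_bot_eq] at hov
  exact hov

end Aux

theorem Estar2_holds {α : Type*} [OrthomodularLattice α]
    (a₁ b₁ a₂ b₂ r : α)
    (h1 : a₁ ≤ b₁ᗮ) (h2 : a₂ ≤ b₂ᗮ) (h3 : r ≤ a₁ᗮ) (h4 : a₁ ≤ a₂ᗮ) (h5 : a₂ ≤ rᗮ) :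
    (a₁ ⊔ a₂ ⊔ r) ⊓ (a₁ ⊔ b₁) ⊓ (a₂ ⊔ b₂) ≤ b₁ ⊔ b₂ ⊔ r := by
  set e := a₁ ⊔ a₂ ⊔ r with he
  set x := e ⊓ (a₁ ⊔ b₁) ⊓ (a₂ ⊔ b₂) with hx
  have ha1e : a₁ ≤ e := le_sup_left.trans le_sup_left
  have ha2e : a₂ ≤ e := le_sup_right.trans le_sup_left
  have hre : r ≤ e := le_sup_right
  have ha2a1 : a₂ ≤ a₁ᗮ := le_oc_swap h4
  have hra2 : r ≤ a₂ᗮ := le_oc_swap h5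
  set β₁ := b₁ ⊓ e with hβ₁
  set β₂ := b₂ ⊓ e with hβ₂
  have hβ₁b : β₁ ≤ b₁ := inf_le_left
  have hβ₂b : β₂ ≤ b₂ := inf_le_left
  have hxe : x ≤ e := inf_le_left.trans inf_le_left
  -- x ≤ a₁ ⊔ β₁
  have hx1 : x ≤ a₁ ⊔ β₁ := by
    have hfh : (a₁ ⊔ b₁) ⊓ e = (a₁ ⊓ e) ⊔ (b₁ ⊓ e) :=
      FH2 (Cm.of_le_oc h1) (Cm.of_le ha1e)
    have : x ≤ (a₁ ⊔ b₁) ⊓ e := le_inf (inf_le_left.trans inf_le_right) hxe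
    rw [hfh, inf_eq_left.2 ha1e] at this
    exact this
  -- x ≤ a₂ ⊔ β₂
  have hx2 : x ≤ a₂ ⊔ β₂ := by
    have hfh : (a₂ ⊔ b₂) ⊓ e = (a₂ ⊓ e) ⊔ (b₂ ⊓ e) :=
      FH2 (Cm.of_le_oc h2) (Cm.of_le ha2e)
    have : x ≤ (a₂ ⊔ b₂) ⊓ e := le_inf inf_le_right hxe
    rw [hfh, inf_eq_left.2 ha2e] at this
    exact this
  -- the gap q and its components
  set q := β₁ᗮ ⊓ β₂ᗮ ⊓ (a₁ ⊔ a₂) with hq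
  set qA := a₂ᗮ ⊓ (a₂ ⊔ q) with hqA
  set qB := a₁ᗮ ⊓ (a₁ ⊔ q) with hqB
  have hq12 : q ≤ a₁ ⊔ a₂ := inf_le_right
  have hqβ₁ : q ≤ β₁ᗮ := inf_le_left.trans inf_le_left
  have hqβ₂ : q ≤ β₂ᗮ := inf_le_left.trans inf_le_right
  -- qA ≤ a₁
  have hqAa1 : qA ≤ a₁ := by
    have h12 : (a₁ ⊔ a₂) ⊓ a₂ᗮ = (a₁ ⊓ a₂ᗮ) ⊔ (a₂ ⊓ a₂ᗮ) :=
      FH1 (Cm.of_le h4) (Cm.self_oc a₂).symm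
    have : qA ≤ (a₁ ⊔ a₂) ⊓ a₂ᗮ :=
      le_inf (inf_le_right.trans (sup_le le_sup_right hq12)) inf_le_left
    rw [h12, inf_oc, sup_bot_eq] at this
    exact this.trans inf_le_left
  -- qB ≤ a₂
  have hqBa2 : qB ≤ a₂ := by
    have h12 : (a₂ ⊔ a₁) ⊓ a₁ᗮ = (a₂ ⊓ a₁ᗮ) ⊔ (a₁ ⊓ a₁ᗮ) :=
      FH1 (Cm.of_le ha2a1) (Cm.self_oc a₁).symm
    have : qB ≤ (a₂ ⊔ a₁) ⊓ a₁ᗮ :=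
      le_inf (inf_le_right.trans (sup_le le_sup_right (hq12.trans (sup_comm _ _).le))) inf_le_left
    rw [h12, inf_oc, sup_bot_eq] at this
    exact this.trans inf_le_left
  -- q ≤ a₂ ⊔ qA  and q ≤ a₁ ⊔ qB
  have hc1A : q ≤ a₂ ⊔ qA := by
    have := om (le_sup_left : a₂ ≤ a₂ ⊔ q)
    calc q ≤ a₂ ⊔ q := le_sup_right
    _ = a₂ ⊔ (a₂ᗮ ⊓ (a₂ ⊔ q)) := this
    _ = a₂ ⊔ qA := by rw [hqA]
  have hc1B : q ≤ a₁ ⊔ qB := by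
    have := om (le_sup_left : a₁ ≤ a₁ ⊔ q)
    calc q ≤ a₁ ⊔ q := le_sup_right
    _ = a₁ ⊔ (a₁ᗮ ⊓ (a₁ ⊔ q)) := this
    _ = a₁ ⊔ qB := by rw [hqB]
  -- qA ⊥ x, qB ⊥ x
  have hqAβ₂ : qA ≤ β₂ᗮ :=
    inf_le_right.trans (sup_le (h2.trans (oc_anti hβ₂b)) hqβ₂)
  have hqBβ₁ : qB ≤ β₁ᗮ :=
    inf_le_right.trans (sup_le (h1.trans (oc_anti hβ₁b)) hqβ₁)
  have hxqA : x ≤ qAᗮ := by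
    have : qA ≤ (a₂ ⊔ β₂)ᗮ := by
      rw [oc_sup]
      exact le_inf (hqAa1.trans h4) hqAβ₂
    exact hx2.trans (le_oc_swap this)
  have hxqB : x ≤ qBᗮ := by
    have : qB ≤ (a₁ ⊔ β₁)ᗮ := by
      rw [oc_sup]
      exact le_inf (hqBa2.trans ha2a1) hqBβ₁
    exact hx1.trans (le_oc_swap this)
  -- q ≤ qA ⊔ qB
  have hqAB : q ≤ qA ⊔ qB := by
    have cmA2z : Cm a₂ (a₁ ⊔ qB) :=
      Cm.sup_right (Cm.of_le_oc ha2a1) (Cm.of_le hqBa2).symm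
    have cmqAqB : Cm qA qB :=
      Cm.of_le_oc (hqAa1.trans (h4.trans (oc_anti hqBa2)))
    have cmqAz : Cm qA (a₁ ⊔ qB) :=
      Cm.sup_right (Cm.of_le hqAa1) cmqAqB
    have hbig : (a₂ ⊔ qA) ⊓ (a₁ ⊔ qB) = (a₂ ⊓ (a₁ ⊔ qB)) ⊔ (qA ⊓ (a₁ ⊔ qB)) :=
      FH1 cmA2z cmqAz
    have h1' : a₂ ⊓ (a₁ ⊔ qB) = qB := by
      have : (a₁ ⊔ qB) ⊓ a₂ = (a₁ ⊓ a₂) ⊔ (qB ⊓ a₂) :=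
        FH1 (Cm.of_le_oc h4) (Cm.of_le hqBa2)
      rw [inf_comm, this, inf_eq_left.2 hqBa2]
      have : a₁ ⊓ a₂ = ⊥ :=
        eq_bot_of_le_of_le_oc (a := a₁ ⊓ a₂) inf_le_right (inf_le_left.trans h4)
      rw [this, bot_sup_eq]
    have h2' : qA ⊓ (a₁ ⊔ qB) = qA := inf_eq_left.2 (hqAa1.trans le_sup_left)
    have : q ≤ (a₂ ⊔ qA) ⊓ (a₁ ⊔ qB) := le_inf hc1A hc1B
    rw [hbig, h1', h2'] at this
    exact this.trans (sup_comm _ _).le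
  -- x ≤ qᗮ
  have hxq : x ≤ qᗮ := by
    have : x ≤ (qA ⊔ qB)ᗮ := by
      rw [oc_sup]; exact le_inf hxqA hxqB
    exact this.trans (oc_anti hqAB)
  -- compute e ⊓ qᗮ
  set m := (a₁ ⊔ a₂)ᗮ with hm
  have hqoc : qᗮ = (β₁ ⊔ β₂) ⊔ m := by
    rw [hq, oc_inf, oc_inf, oc_oc, oc_oc, hm]
  have hrm : r ≤ m := by
    rw [hm, oc_sup]; exact le_inf h3 hra2
  have hme : e ⊓ m = r := by
    have hfh : ((a₁ ⊔ a₂) ⊔ r) ⊓ m = ((a₁ ⊔ a₂) ⊓ m) ⊔ (r ⊓ m) :=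
      FH1 (Cm.of_le_oc (by rw [hm, oc_oc])) (Cm.of_le hrm)
    have h0 : (a₁ ⊔ a₂) ⊓ m = ⊥ := by rw [hm]; exact inf_oc _
    rw [he, hfh, h0, bot_sup_eq, inf_eq_left.2 hrm]
  have hfinal : ((β₁ ⊔ β₂) ⊔ m) ⊓ e = (β₁ ⊔ β₂) ⊔ r := by
    have cmβe : Cm (β₁ ⊔ β₂) e :=
      Cm.of_le (sup_le inf_le_right inf_le_right)
    have cmme : Cm m e := by
      have c1 : Cm m (a₁ ⊔ a₂) := Cm.of_le_oc (by rw [hm])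
      have c2 : Cm m r := (Cm.of_le hrm).symm
      exact Cm.sup_right c1 c2
    have hfh : ((β₁ ⊔ β₂) ⊔ m) ⊓ e = ((β₁ ⊔ β₂) ⊓ e) ⊔ (m ⊓ e) :=
      FH1 cmβe cmme
    rw [hfh, inf_eq_left.2 (sup_le inf_le_right inf_le_right), inf_comm, hme]
  have hxd' : x ≤ (β₁ ⊔ β₂) ⊔ r := by
    have : x ≤ ((β₁ ⊔ β₂) ⊔ m) ⊓ e := le_inf (hqoc ▸ hxq) hxe
    rwa [hfinal] at this
  exact hxd'.trans (sup_le_sup (sup_le_sup hβ₁b hβ₂b) le_rfl)
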